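/- For N ≥ 3, D_q(N) = (48/15) · 4^{N-3} · Θ_3(N), where D_q(N) = 16·([2N choose 5]_2 − [N choose 5]_2·∏_{i=1}^{5}(2^{N+1-i}+1) − 15·[N choose 4]_2·2^{2N-8}·∏_{i=1}^{4}(2^{N+1-i}+1)/3) and Θ_3(N) = (7/3)·2^{2N-6}·∏_{i=1}^{3} (2^{N-3+i}−1)/(2^i−1) · ∏_{i=1}^{3}(2^{N+1-i}+1). -/

import Mathlib

/-- The Gaussian binomial coefficient `[n choose k]_q`. -/
def gaussBinom (q n k : ℕ) : ℕ :=
  (∏ i ∈ Finset.range k, (q ^ (n - i) - 1)) / ∏ i ∈ Finset.range k, (q ^ (i + 1) - 1)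

/-- The number of quadratic `N`-qubit doilies:
`D_q(N) = 16·([2N 5]_2 − [N 5]_2·∏_{i=1}^{5}(2^{N+1-i}+1) − 15·[N 4]_2·2^{2N-8}·∏_{i=1}^{4}(2^{N+1-i}+1)/3)`. -/
noncomputable def DqQ (N : ℕ) : ℚ :=
  16 * ((gaussBinom 2 (2 * N) 5 : ℚ)
    - (gaussBinom 2 N 5 : ℚ) * ∏ i ∈ Finset.range 5, ((2 : ℚ) ^ (N - i) + 1)
    - 15 * (gaussBinom 2 N 4 : ℚ) * (2 : ℚ) ^ (2 * N - 8) *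
        (∏ i ∈ Finset.range 4, ((2 : ℚ) ^ (N - i) + 1)) / 3)

/-- `Θ_3(N) = (7/3)·2^{2N-6}·∏_{i=1}^{3} (2^{N-3+i}−1)/(2^i−1) · ∏_{i=1}^{3}(2^{N+1-i}+1)`,
the number of `PG(3,2)`s of `PG(2N-1,2)` with exactly three totally isotropic planes. -/
noncomputable def Theta3 (N : ℕ) : ℚ :=
  (7 / 3) * (2 : ℚ) ^ (2 * N - 6) *
    (∏ i ∈ Finset.range 3, (((2 : ℚ) ^ (N - 2 + i) - 1) / ((2 : ℚ) ^ (i + 1) - 1))) *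
    ∏ i ∈ Finset.range 3, ((2 : ℚ) ^ (N - i) + 1)

open Finset

section GaussBinom

variable (q : ℕ)

lemma pow_succ_sub_one_eq_mul_add {k n : ℕ} (hkn : k ≤ n) :
    q ^ (n + 1) - 1 = q ^ (k + 1) * (q ^ (n - k) - 1) + (q ^ (k + 1) - 1) := by
  obtain ⟨d, rfl⟩ := Nat.exists_eq_add_of_le hkn
  rcases Nat.eq_zero_or_pos q with rfl | hq
  · simp
  · rw [Nat.add_sub_cancel_left]
    zify [Nat.one_le_pow (k + d + 1) q hq, Nat.one_le_pow d q hq, Nat.one_le_pow (k + 1) q hq]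
    ring

lemma prod_pow_sub_one_eq_zero {n k : ℕ} (hnk : n < k) :
    ∏ i ∈ range k, (q ^ (n - i) - 1) = 0 :=
  prod_eq_zero (mem_range.2 hnk) (by simp)

/-- The `q`-Pascal rule `[n+1, k+1] = q^(k+1) [n, k+1] + [n, k]`, cleared of denominators, shows
that the Gaussian binomial coefficient is an integer. -/
theorem prod_pow_succ_sub_one_dvd (n k : ℕ) :
    ∏ i ∈ range k, (q ^ (i + 1) - 1) ∣ ∏ i ∈ range k, (q ^ (n - i) - 1) := by
  induction n generalizing k with
  | zero =>
    rcases k.eq_zero_or_pos with rfl | hk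
    · simp
    · rw [prod_pow_sub_one_eq_zero q hk]
      exact dvd_zero _
  | succ n ih =>
    rcases k with _ | k
    · simp
    rcases lt_or_ge n k with hnk | hkn
    · simp [prod_pow_sub_one_eq_zero q (Nat.succ_lt_succ hnk)]
    have hpascal : ∏ i ∈ range (k + 1), (q ^ (n + 1 - i) - 1) =
        q ^ (k + 1) * ∏ i ∈ range (k + 1), (q ^ (n - i) - 1) +
          (∏ i ∈ range k, (q ^ (n - i) - 1)) * (q ^ (k + 1) - 1) := by
      rw [prod_range_succ', prod_range_succ _ k]
      simp only [Nat.reduceSubDiff, tsub_zero, pow_succ_sub_one_eq_mul_add q hkn]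
      ring
    rw [hpascal]
    refine dvd_add (dvd_mul_of_dvd_right (ih _) _) ?_
    rw [prod_range_succ]
    exact mul_dvd_mul (ih k) dvd_rfl

theorem gaussBinom_cast {K : Type*} [Field K] [CharZero K] (hq : 1 ≤ q) (n k : ℕ) :
    (gaussBinom q n k : K) =
      (∏ i ∈ range k, ((q : K) ^ (n - i) - 1)) / ∏ i ∈ range k, ((q : K) ^ (i + 1) - 1) := by
  rw [gaussBinom, Nat.cast_div_charZero (prod_pow_succ_sub_one_dvd q n k)]
  simp [Nat.cast_sub (Nat.one_le_pow _ _ hq)]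

end GaussBinom

/-- For `N ≥ 3`, `D_q(N) = (48/15) · 4^{N-3} · Θ_3(N)`. -/
theorem DqQ_eq_theta3 (N : ℕ) (hN : 3 ≤ N) :
    DqQ N = (48 / 15) * (4 : ℚ) ^ ((N : ℤ) - 3) * Theta3 N := by
  obtain rfl | hN4 := hN.eq_or_lt
  -- at `N = 3` the exponents `N - 4` and `2 * N - 8` truncate, so evaluate directly
  · norm_num [DqQ, Theta3, gaussBinom, prod_range_succ]
  have hsub : ∀ a i : ℕ, i ≤ a → (2 : ℚ) ^ (a - i) = 2 ^ a / 2 ^ i :=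
    fun a i hi => pow_sub₀ 2 two_ne_zero hi
  have hfour : (4 : ℚ) ^ ((N : ℤ) - 3) = (2 ^ N) ^ 2 / 2 ^ 6 := by
    rw [zpow_sub₀ four_ne_zero, zpow_natCast, show (4 : ℚ) = 2 ^ 2 by norm_num, ← pow_mul,
      mul_comm, pow_mul]
    norm_num
  -- every power of `2` becomes `2 ^ N` or `(2 ^ N) ^ 2` over a constant
  rw [hfour, DqQ, Theta3]
  simp only [gaussBinom_cast 2 one_le_two, prod_range_succ, prod_range_zero, Nat.cast_ofNat, pow_add]
  simp (disch := omega) only [hsub]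
  simp only [pow_mul']
  field_simp
  ring
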